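/- There is no cohomology-free vector c = (c_1,c_2,c_3,c_4,c_5) ∈ ℤ⁵ with c_5 = 2 and c_4 ≥ 5. -/

import Mathlib

/-- The primitive ray generators `l₁,…,l₇` of the fan, in counterclockwise order,
acting on `ℤ²` by the dot product. -/
def rayForm : Fin 7 → ℤ × ℤ :=
  ![(1, -1), (2, -1), (3, -1), (1, 0), (0, 1), (-1, 2), (0, -1)]

/-- Extend `c ∈ ℤ⁵` to seven coefficients by `c₆ = c₇ = 0`. -/
def cExt (c : Fin 5 → ℤ) : Fin 7 → ℤ :=
  fun i => if h : (i : ℕ) < 5 then c ⟨i, h⟩ else 0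

/-- `N_c(m) = {i : l_i(m) + c_i < 0}`. -/
def Nset (c : Fin 5 → ℤ) (m : ℤ × ℤ) : Finset (Fin 7) :=
  Finset.univ.filter fun i =>
    (rayForm i).1 * m.1 + (rayForm i).2 * m.2 + cExt c i < 0

open Fin.NatCast in
/-- A subset of the cyclic index set `Fin 7` is a circular interval if it is empty
or of the form `{a, a+1, …, b}` with indices taken modulo 7. -/
def IsCircularInterval (S : Finset (Fin 7)) : Prop :=
  S = ∅ ∨ ∃ (a : Fin 7) (n : ℕ),
    S = (Finset.range (n + 1)).image fun j : ℕ => a + (j : Fin 7)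

/-- `c ∈ ℤ⁵` is cohomology-free if for every `m ∈ ℤ²` and both `ε ∈ {1, -1}`,
the set `N_{εc}(m)` is a circular interval different from the whole index set. -/
def CohomologyFree (c : Fin 5 → ℤ) : Prop :=
  ∀ m : ℤ × ℤ, ∀ ε : ℤ, ε = 1 ∨ ε = -1 →
    IsCircularInterval (Nset (ε • c) m) ∧ Nset (ε • c) m ≠ Finset.univ


/-!
Take `ε = -1` and `m = (4, 2)`. Since `c₄ ≥ 5` and `c₅ = 2`, the set `N_{-c}(m)` contains the
indices 4 and 7 but not 5, so as a circular interval it ends at 4 and runs from 7 through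
1, 2, 3 to 4. This gives `c₁ > 2`, `c₂ > 6`, `c₃ > 10`, and these bounds make
`N_{-c}(3, 1)` the whole index set. (In `Fin 7` every index is shifted down by one.)
-/

lemma mem_Nset {c : Fin 5 → ℤ} {m : ℤ × ℤ} {i : Fin 7} :
    i ∈ Nset c m ↔ (rayForm i).1 * m.1 + (rayForm i).2 * m.2 + cExt c i < 0 := by
  simp [Nset]

lemma CohomologyFree.neg {c : Fin 5 → ℤ} (hc : CohomologyFree c) (m : ℤ × ℤ) :
    IsCircularInterval (Nset (-c) m) ∧ Nset (-c) m ≠ Finset.univ := by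
  simpa using hc m (-1) (Or.inr rfl)

section CircularInterval

open Fin.NatCast

lemma Fin.image_add_range_eq_univ {n : ℕ} [NeZero n] (a : Fin n) {k : ℕ} (hk : n ≤ k + 1) :
    ((Finset.range (k + 1)).image fun j : ℕ => a + (j : Fin n)) = Finset.univ := by
  refine Finset.eq_univ_of_forall fun i => Finset.mem_image.mpr ⟨(i - a).val, ?_, ?_⟩
  · have := (i - a).isLt
    exact Finset.mem_range.mpr (by omega)
  · rw [Fin.cast_val_eq_self, add_comm, sub_add_cancel]

lemma IsCircularInterval.add_mem_of_mem_of_succ_notMem {S : Finset (Fin 7)}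
    (hS : IsCircularInterval S) {i j : Fin 7} (hi : i ∈ S) (hsucc : i + 1 ∉ S) (hj : j ∈ S)
    {t : ℕ} (ht : t ≤ (i - j).val) : j + t ∈ S := by
  obtain rfl | ⟨a, n, rfl⟩ := hS
  · simp at hi
  have hn : n < 6 := by
    by_contra! hn
    exact hsucc (Fin.image_add_range_eq_univ a (k := n) (by omega) ▸ Finset.mem_univ _)
  simp only [Finset.mem_image, Finset.mem_range] at hi hsucc hj ⊢
  obtain ⟨p, hp, rfl⟩ := hi
  obtain ⟨q, hq, rfl⟩ := hj
  have hpn : p = n := by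
    by_contra hne
    exact hsucc ⟨p + 1, by omega, by rw [Nat.cast_add_one, add_assoc]⟩
  subst hpn
  rw [add_sub_add_left_eq_sub, Fin.val_sub, Fin.val_natCast, Fin.val_natCast] at ht
  exact ⟨q + t, by omega, by rw [Nat.cast_add, add_assoc]⟩

end CircularInterval

/-- There is no cohomology-free vector with `c₅ = 2` and `c₄ ≥ 5`. -/
theorem no_cohomologyFree_c5_two_c4_ge_five :
    ¬ ∃ c : Fin 5 → ℤ, CohomologyFree c ∧ c 4 = 2 ∧ 5 ≤ c 3 := by
  rintro ⟨c, hfree, hc4, hc3⟩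
  set S := Nset (-c) (4, 2)
  have h3 : (3 : Fin 7) ∈ S := by simp [S, mem_Nset, rayForm, cExt]; omega
  have h4 : (3 + 1 : Fin 7) ∉ S := by simp [S, mem_Nset, rayForm, cExt]; omega
  have h6 : (6 : Fin 7) ∈ S := by simp [S, mem_Nset, rayForm, cExt]
  have hS : IsCircularInterval S := (hfree.neg (4, 2)).1
  have h0 : (0 : Fin 7) ∈ S := hS.add_mem_of_mem_of_succ_notMem h3 h4 h6 (t := 1) (by decide)
  have h1 : (1 : Fin 7) ∈ S := hS.add_mem_of_mem_of_succ_notMem h3 h4 h6 (t := 2) (by decide)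
  have h2 : (2 : Fin 7) ∈ S := hS.add_mem_of_mem_of_succ_notMem h3 h4 h6 (t := 3) (by decide)
  simp [S, mem_Nset, rayForm, cExt] at h0 h1 h2
  refine (hfree.neg (3, 1)).2 (Finset.eq_univ_of_forall fun i => ?_)
  fin_cases i <;> simp [mem_Nset, rayForm, cExt] <;> omega
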